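/- Let Q = (q_n) be a basic sequence that is infinite in limit and let x = E_0.E_1E_2… w.r.t. Q. Then x is Q-distribution normal if and only if the sequence (E_n/q_n)_{n≥1} is uniformly distributed mod 1. -/

import Mathlib

open Filter Finset MeasureTheory

noncomputable section
open scoped Classical

/-- `cantorProd q n = q 1 * q 2 * ... * q n` (empty product for `n = 0`). -/
def cantorProd (q : ℕ → ℕ) (n : ℕ) : ℕ := ∏ j ∈ Finset.Icc 1 n, q j

/-- `T_{Q,n}(x) = q_1 q_2 ⋯ q_n · x (mod 1)`. -/
def TQ (q : ℕ → ℕ) (n : ℕ) (x : ℝ) : ℝ := Int.fract ((cantorProd q n : ℝ) * x)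

/-- A basic sequence: `q n ≥ 2` for all `n ≥ 1`. -/
def BasicSeq (q : ℕ → ℕ) : Prop := ∀ n, 1 ≤ n → 2 ≤ q n

/-- `Q` is infinite in limit: `q n → ∞`. -/
def InfiniteInLimit (q : ℕ → ℕ) : Prop := Filter.Tendsto q Filter.atTop Filter.atTop

/-- `E` (indexed from 1) is the sequence of digits of the `Q`-Cantor series expansion of `x`:
`E n ∈ {0, …, q n − 1}`, `E n ≠ q n − 1` infinitely often, and
`x = ⌊x⌋ + ∑_{n ≥ 1} E n / (q 1 ⋯ q n)`. -/
def IsCantorDigits (q : ℕ → ℕ) (E : ℕ → ℕ) (x : ℝ) : Prop :=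
  (∀ n, 1 ≤ n → E n < q n) ∧
  {n | 1 ≤ n ∧ E n ≠ q n - 1}.Infinite ∧
  x = (⌊x⌋ : ℝ) + ∑' n : ℕ, (E (n + 1) : ℝ) / (cantorProd q (n + 1) : ℝ)

/-- `Q_n^{(k)} = ∑_{j=1}^n 1/(q_j q_{j+1} ⋯ q_{j+k-1})`. -/
def Qnk (q : ℕ → ℕ) (k n : ℕ) : ℝ :=
  ∑ j ∈ Finset.Icc 1 n, 1 / ∏ i ∈ Finset.Ico j (j + k), (q i : ℝ)

/-- `Q` is `k`-divergent. -/
def KDivergent (q : ℕ → ℕ) (k : ℕ) : Prop :=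
  Filter.Tendsto (fun n => Qnk q k n) Filter.atTop Filter.atTop

/-- `N_n^Q(B, x)`: the number of indices `1 ≤ i ≤ n - |B| + 1` at which the block `B`
occurs in the digit sequence `E`. -/
def blockCount (E : ℕ → ℕ) (B : List ℕ) (n : ℕ) : ℕ :=
  ((Finset.Icc 1 (n + 1 - B.length)).filter
    (fun i => ∀ t, t < B.length → E (i + t) = B.getD t 0)).card

/-- The digit sequence `E` is `Q`-normal of order `k`. -/
def QNormalOfOrder (q : ℕ → ℕ) (E : ℕ → ℕ) (k : ℕ) : Prop :=
  ∀ B : List ℕ, B.length = k →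
    Filter.Tendsto (fun n => (blockCount E B n : ℝ) / Qnk q k n) Filter.atTop (nhds 1)

/-- A sequence (indexed from 0) is uniformly distributed mod 1. -/
def UDMod1 (z : ℕ → ℝ) : Prop :=
  ∀ a b : ℝ, 0 ≤ a → a < b → b ≤ 1 →
    Filter.Tendsto
      (fun N => (((Finset.range N).filter (fun n => Int.fract (z n) ∈ Set.Ico a b)).card : ℝ) / N)
      Filter.atTop (nhds (b - a))

/-- `x` is `Q`-distribution normal: `(T_{Q,n}(x))_{n ≥ 0}` is uniformly distributed mod 1. -/
def QDistNormal (q : ℕ → ℕ) (x : ℝ) : Prop := UDMod1 (fun n => TQ q n x)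

/-- A set of natural numbers has (natural) density zero. -/
def DensityZero (A : Set ℕ) : Prop :=
  Filter.Tendsto (fun N => (((Finset.Icc 1 N).filter (fun n => n ∈ A)).card : ℝ) / N)
    Filter.atTop (nhds 0)

/-- The `n`-th digit (for `n ≥ 1`) of the `Q`-Cantor series expansion of `x`,
extracted via `E_n = ⌊q_n · T_{Q,n-1}(x)⌋`. -/
def cantorDigit (q : ℕ → ℕ) (x : ℝ) (n : ℕ) : ℤ := ⌊(q n : ℝ) * TQ q (n - 1) x⌋

/-- `ψ_{P,Q}(x) = ∑_{n ≥ 1} min(E_n, q_n − 1)/(q_1 ⋯ q_n)`, where `E` are the `P`-digits of `x`. -/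
def psiMap (p q : ℕ → ℕ) (x : ℝ) : ℝ :=
  ∑' n : ℕ, ((min (cantorDigit p x (n + 1)) ((q (n + 1) : ℤ) - 1) : ℤ) : ℝ) /
    (cantorProd q (n + 1) : ℝ)

/-- `N_n^Q(B, x)` defined via the canonical digits of the real number `x`. -/
def blockCountReal (q : ℕ → ℕ) (x : ℝ) (B : List ℕ) (n : ℕ) : ℕ :=
  ((Finset.Icc 1 (n + 1 - B.length)).filter
    (fun i => ∀ t, t < B.length → cantorDigit q x (i + t) = (B.getD t 0 : ℤ))).card

/-- The real number `x` is `Q`-normal of order `k`. -/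
def QNormalOfOrderReal (q : ℕ → ℕ) (x : ℝ) (k : ℕ) : Prop :=
  ∀ B : List ℕ, B.length = k →
    Filter.Tendsto (fun n => (blockCountReal q x B n : ℝ) / Qnk q k n) Filter.atTop (nhds 1)

/-- The discrepancy `D_N` of the finite sequence `x 1, …, x N` (of numbers in `[0,1)`). -/
def discrepancy (N : ℕ) (x : ℕ → ℝ) : ℝ :=
  sSup {d : ℝ | ∃ a b : ℝ, 0 ≤ a ∧ a ≤ b ∧ b ≤ 1 ∧
    d = |(((Finset.Icc 1 N).filter (fun n => x n ∈ Set.Ico a b)).card : ℝ) / N - (b - a)|}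

/-! Writing `P n = q 1 ⋯ q n`, multiplication by `P n` turns `⌊x⌋` and the first `n` terms
of the Cantor series into integers, so `T_{Q,n}(x) = P n * ∑_{j > n} E j / P j`. This remainder
lies in `[0, 1)` because it is dominated termwise by the telescoping series of maximal digits
`(q j - 1) / P j = 1 / P (j - 1) - 1 / P j`, strictly so since `E j ≠ q j - 1` infinitely often.
Splitting off the first term gives `0 ≤ T_{Q,n}(x) - E (n+1) / q (n+1) < 1 / q (n+1) → 0`, and
uniform distribution mod 1 is insensitive to perturbations tending to `0`. -/

open Topology

lemma hasSum_sub_succ_of_antitone {f : ℕ → ℝ} (hf : ∀ n, f (n + 1) ≤ f n)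
    (hlim : Tendsto f atTop (𝓝 0)) : HasSum (fun n => f n - f (n + 1)) (f 0) := by
  rw [hasSum_iff_tendsto_nat_of_nonneg fun n => sub_nonneg.2 (hf n)]
  simp_rw [sum_range_sub']
  simpa using tendsto_const_nhds.sub hlim

lemma eventually_card_filter_div_lt_add {p r : ℕ → Prop} [DecidablePred p] [DecidablePred r]
    (h : ∀ᶠ n in atTop, p n → r n) {ε : ℝ} (hε : 0 < ε) :
    ∀ᶠ N : ℕ in atTop, (((range N).filter p).card : ℝ) / N <
      (((range N).filter r).card : ℝ) / N + ε := by
  obtain ⟨n₀, hn₀⟩ := eventually_atTop.1 h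
  have hcard (N : ℕ) : (((range N).filter p).card : ℝ) ≤
      n₀ + ((range N).filter r).card := by
    have hsub : (range N).filter p ⊆ range n₀ ∪ (range N).filter r := by
      intro n hn
      rw [mem_filter] at hn
      rw [mem_union, mem_range, mem_filter]
      by_cases hn₀n : n < n₀
      · exact .inl hn₀n
      · exact .inr ⟨hn.1, hn₀ n (not_lt.1 hn₀n) hn.2⟩
    exact_mod_cast (card_le_card hsub).trans
      ((card_union_le _ _).trans_eq (by rw [card_range]))
  filter_upwards [(tendsto_const_div_atTop_nhds_zero_nat (n₀ : ℝ)).eventually (gt_mem_nhds hε),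
    eventually_gt_atTop 0] with N hN hNpos
  calc (((range N).filter p).card : ℝ) / N
      ≤ (n₀ + ((range N).filter r).card) / N := by gcongr; exact hcard N
    _ < _ := by rw [add_div]; linarith

lemma UDMod1.of_tendsto_fract_sub {z w : ℕ → ℝ} (hw : UDMod1 w)
    (hzw : Tendsto (fun n => Int.fract (z n) - Int.fract (w n)) atTop (𝓝 0)) : UDMod1 z := by
  intro a b ha hab hb
  have hclose {δ : ℝ} (hδ : 0 < δ) :
      ∀ᶠ n in atTop, |Int.fract (z n) - Int.fract (w n)| < δ := by
    simpa [Real.dist_eq] using Metric.tendsto_nhds.1 hzw δ hδ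
  refine tendsto_order.2 ⟨fun c hc => ?_, fun c hc => ?_⟩
  · set δ := (b - a - max c 0) / 4 with hδ_def
    have hδ : 0 < δ := by linarith [max_lt hc (sub_pos.2 hab)]
    have hfreq := (hw (a + δ) (b - δ) (by linarith) (by linarith [le_max_right c 0])
      (by linarith)).eventually
        (lt_mem_nhds (show b - δ - (a + δ) - δ < b - δ - (a + δ) by linarith))
    have himp : ∀ᶠ n in atTop, Int.fract (w n) ∈ Set.Ico (a + δ) (b - δ) →
        Int.fract (z n) ∈ Set.Ico a b := by
      filter_upwards [hclose hδ] with n hn hmem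
      rw [abs_lt] at hn
      exact ⟨by linarith [hmem.1], by linarith [hmem.2]⟩
    filter_upwards [hfreq, eventually_card_filter_div_lt_add himp hδ] with N h₁ h₂
    linarith [le_max_left c 0]
  · set δ := (c - (b - a)) / 4 with hδ_def
    have hδ : 0 < δ := by linarith
    -- `UDMod1 w` only speaks of subintervals of `[0, 1]`, hence the clipping.
    have hfreq := (hw (max 0 (a - δ)) (min 1 (b + δ)) (le_max_left _ _)
      ((max_le ha (by linarith)).trans_lt (hab.trans_le (le_min hb (by linarith))))
      (min_le_left _ _)).eventually
        (gt_mem_nhds (show min 1 (b + δ) - max 0 (a - δ) < min 1 (b + δ) - max 0 (a - δ) + δ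
          by linarith))
    have himp : ∀ᶠ n in atTop, Int.fract (z n) ∈ Set.Ico a b →
        Int.fract (w n) ∈ Set.Ico (max 0 (a - δ)) (min 1 (b + δ)) := by
      filter_upwards [hclose hδ] with n hn hmem
      rw [abs_lt] at hn
      exact ⟨max_le (Int.fract_nonneg _) (by linarith [hmem.1]),
        lt_min (Int.fract_lt_one _) (by linarith [hmem.2])⟩
    filter_upwards [hfreq, eventually_card_filter_div_lt_add himp hδ] with N h₁ h₂
    linarith [min_le_right 1 (b + δ), le_max_right 0 (a - δ)]

lemma udMod1_iff_of_tendsto_fract_sub {z w : ℕ → ℝ}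
    (h : Tendsto (fun n => Int.fract (z n) - Int.fract (w n)) atTop (𝓝 0)) :
    UDMod1 z ↔ UDMod1 w :=
  ⟨fun hz => hz.of_tendsto_fract_sub (by simpa using h.neg),
    fun hw => hw.of_tendsto_fract_sub h⟩

lemma cantorProd_succ (q : ℕ → ℕ) (n : ℕ) :
    cantorProd q (n + 1) = cantorProd q n * q (n + 1) :=
  prod_Icc_succ_top (Nat.le_add_left 1 n) q

lemma cantorProd_dvd (q : ℕ → ℕ) {m n : ℕ} (h : m ≤ n) : cantorProd q m ∣ cantorProd q n :=
  prod_dvd_prod_of_subset _ _ q (Icc_subset_Icc_right h)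

namespace BasicSeq

variable {q : ℕ → ℕ}

lemma cantorProd_pos (hq : BasicSeq q) (n : ℕ) : 0 < cantorProd q n :=
  prod_pos fun i hi => by have := hq i (mem_Icc.1 hi).1; omega

lemma two_pow_le_cantorProd (hq : BasicSeq q) (n : ℕ) : 2 ^ n ≤ cantorProd q n := by
  simpa [cantorProd] using
    pow_card_le_prod (Icc 1 n) q 2 fun i hi => hq i (mem_Icc.1 hi).1

lemma tendsto_inv_cantorProd (hq : BasicSeq q) :
    Tendsto (fun n => (cantorProd q n : ℝ)⁻¹) atTop (𝓝 0) :=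
  (tendsto_atTop_mono (fun n => by exact_mod_cast hq.two_pow_le_cantorProd n)
    (tendsto_pow_atTop_atTop_of_one_lt one_lt_two)).inv_tendsto_atTop

lemma inv_cantorProd_sub_inv_succ (hq : BasicSeq q) (n : ℕ) :
    (cantorProd q n : ℝ)⁻¹ - (cantorProd q (n + 1) : ℝ)⁻¹ =
      ((q (n + 1) : ℝ) - 1) / cantorProd q (n + 1) := by
  have := hq.cantorProd_pos n
  have := hq (n + 1) (by omega)
  rw [cantorProd_succ, Nat.cast_mul]
  field_simp

lemma hasSum_inv_cantorProd_sub (hq : BasicSeq q) (k : ℕ) :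
    HasSum (fun j => (cantorProd q (j + k) : ℝ)⁻¹ - (cantorProd q (j + k + 1) : ℝ)⁻¹)
      (cantorProd q k : ℝ)⁻¹ := by
  have h := hasSum_sub_succ_of_antitone (f := fun j => (cantorProd q (j + k) : ℝ)⁻¹)
    (fun j => ?_) (hq.tendsto_inv_cantorProd.comp (tendsto_add_atTop_nat k))
  · simpa only [Nat.add_right_comm _ 1 k, zero_add] using h
  · rw [Nat.add_right_comm, ← sub_nonneg, hq.inv_cantorProd_sub_inv_succ]
    have : (1 : ℝ) ≤ q (j + k + 1) := by
      exact_mod_cast (hq (j + k + 1) (by omega)).trans' one_le_two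
    exact div_nonneg (by linarith) (by positivity)

end BasicSeq

def cantorTerm (q E : ℕ → ℕ) (n : ℕ) : ℝ := E n / cantorProd q n

section CantorSeries

variable {q E : ℕ → ℕ} {x : ℝ}

lemma cantorTerm_nonneg (n : ℕ) : 0 ≤ cantorTerm q E n := by
  unfold cantorTerm; positivity

lemma cantorTerm_succ_le (hq : BasicSeq q) {n : ℕ} (hE : E (n + 1) < q (n + 1)) :
    cantorTerm q E (n + 1) ≤ (cantorProd q n : ℝ)⁻¹ - (cantorProd q (n + 1) : ℝ)⁻¹ := by
  rw [hq.inv_cantorProd_sub_inv_succ, cantorTerm]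
  gcongr
  rw [le_sub_iff_add_le]
  exact_mod_cast hE

lemma cantorTerm_succ_lt (hq : BasicSeq q) {n : ℕ} (hE : E (n + 1) + 1 < q (n + 1)) :
    cantorTerm q E (n + 1) < (cantorProd q n : ℝ)⁻¹ - (cantorProd q (n + 1) : ℝ)⁻¹ := by
  have := hq.cantorProd_pos (n + 1)
  rw [hq.inv_cantorProd_sub_inv_succ, cantorTerm]
  gcongr
  rw [lt_sub_iff_add_lt]
  exact_mod_cast hE

lemma summable_cantorTerm_tail (hq : BasicSeq q) (hE : ∀ n, 1 ≤ n → E n < q n) (k : ℕ) :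
    Summable fun j => cantorTerm q E (j + k + 1) :=
  .of_nonneg_of_le (fun _ => cantorTerm_nonneg _)
    (fun j => cantorTerm_succ_le hq (hE _ (by omega))) (hq.hasSum_inv_cantorProd_sub k).summable

lemma tsum_cantorTerm_tail_lt (hq : BasicSeq q) (hE : ∀ n, 1 ≤ n → E n < q n)
    (hnonmax : {n | 1 ≤ n ∧ E n ≠ q n - 1}.Infinite) (k : ℕ) :
    ∑' j, cantorTerm q E (j + k + 1) < (cantorProd q k : ℝ)⁻¹ := by
  obtain ⟨m, ⟨hm1, hm⟩, hkm⟩ := hnonmax.exists_gt k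
  obtain ⟨i, rfl⟩ : ∃ i, m = i + k + 1 := ⟨m - k - 1, by omega⟩
  have hlt : E (i + k + 1) + 1 < q (i + k + 1) := by have := hE _ hm1; omega
  have hmax := hq.hasSum_inv_cantorProd_sub k
  refine (Summable.tsum_lt_tsum_of_nonneg (i := i) (f := fun j => cantorTerm q E (j + k + 1))
    (fun _ => cantorTerm_nonneg _) (fun j => cantorTerm_succ_le hq (hE _ (by omega)))
    (cantorTerm_succ_lt hq hlt) hmax.summable).trans_eq hmax.tsum_eq

lemma cantorProd_mul_cantorTerm_eq_natCast (hq : BasicSeq q) {i n : ℕ} (hin : i ≤ n) :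
    (cantorProd q n : ℝ) * cantorTerm q E i =
      ((E i * (cantorProd q n / cantorProd q i) : ℕ) : ℝ) := by
  have := hq.cantorProd_pos i
  rw [Nat.cast_mul, Nat.cast_div (cantorProd_dvd q hin) (by positivity), cantorTerm]
  ring

lemma TQ_eq_of_isCantorDigits (hq : BasicSeq q) (hE : IsCantorDigits q E x) (n : ℕ) :
    TQ q n x = cantorProd q n * ∑' j, cantorTerm q E (j + n + 1) := by
  obtain ⟨hlt, hnonmax, hx⟩ := hE
  set tail := ∑' j, cantorTerm q E (j + n + 1)
  have hsplit : x = ⌊x⌋ + ∑ i ∈ range n, cantorTerm q E (i + 1) + tail := by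
    rw [add_assoc, Summable.sum_add_tsum_nat_add n (summable_cantorTerm_tail hq hlt 0)]
    exact hx
  have hint : (cantorProd q n : ℝ) * x = ((cantorProd q n * ⌊x⌋ + (∑ i ∈ range n,
      E (i + 1) * (cantorProd q n / cantorProd q (i + 1)) : ℕ) : ℤ) : ℝ) +
        cantorProd q n * tail := by
    simp only [Int.cast_add, Int.cast_mul, Int.cast_natCast, Nat.cast_sum, Int.cast_sum]
    rw [← sum_congr rfl fun i hi =>
      cantorProd_mul_cantorTerm_eq_natCast hq (mem_range.1 hi), ← mul_sum]
    nth_rw 1 [hsplit]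
    ring
  have hpos : (0 : ℝ) < cantorProd q n := by exact_mod_cast hq.cantorProd_pos n
  rw [TQ, hint, Int.fract_intCast_add, Int.fract_eq_self]
  refine ⟨mul_nonneg hpos.le (tsum_nonneg fun _ => cantorTerm_nonneg _), ?_⟩
  calc (cantorProd q n : ℝ) * tail < cantorProd q n * (cantorProd q n : ℝ)⁻¹ :=
        mul_lt_mul_of_pos_left (tsum_cantorTerm_tail_lt hq hlt hnonmax n) hpos
    _ = 1 := mul_inv_cancel₀ hpos.ne'

lemma TQ_sub_digit_div_eq (hq : BasicSeq q) (hE : IsCantorDigits q E x) (n : ℕ) :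
    TQ q n x - E (n + 1) / q (n + 1) =
      cantorProd q n * ∑' j, cantorTerm q E (j + (n + 1) + 1) := by
  have := hq.cantorProd_pos n
  have := hq (n + 1) (by omega)
  rw [TQ_eq_of_isCantorDigits hq hE, (summable_cantorTerm_tail hq hE.1 n).tsum_eq_zero_add,
    mul_add, cantorTerm, cantorProd_succ, Nat.cast_mul]
  simp only [zero_add, Nat.add_right_comm _ 1 n, add_assoc]
  field_simp
  ring

lemma tendsto_TQ_sub_digit_div (hq : BasicSeq q) (hinf : InfiniteInLimit q)
    (hE : IsCantorDigits q E x) :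
    Tendsto (fun n => TQ q n x - E (n + 1) / q (n + 1)) atTop (𝓝 0) := by
  refine squeeze_zero (fun n => ?_) (fun n => ?_) (g := fun n => ((q (n + 1) : ℝ))⁻¹)
    (tendsto_natCast_atTop_atTop.comp (hinf.comp (tendsto_add_atTop_nat 1))).inv_tendsto_atTop
  · rw [TQ_sub_digit_div_eq hq hE]
    exact mul_nonneg (Nat.cast_nonneg _) (tsum_nonneg fun _ => cantorTerm_nonneg _)
  · have := hq.cantorProd_pos n
    have := hq (n + 1) (by omega)
    rw [TQ_sub_digit_div_eq hq hE]
    calc (cantorProd q n : ℝ) * ∑' j, cantorTerm q E (j + (n + 1) + 1)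
        ≤ cantorProd q n * (cantorProd q (n + 1) : ℝ)⁻¹ := by
          gcongr
          exact (tsum_cantorTerm_tail_lt hq hE.1 hE.2.1 (n + 1)).le
      _ = ((q (n + 1) : ℝ))⁻¹ := by
          rw [cantorProd_succ, Nat.cast_mul]
          field_simp

end CantorSeries

theorem stmt_12 (q : ℕ → ℕ) (hq : BasicSeq q) (hinf : InfiniteInLimit q)
    (x : ℝ) (E : ℕ → ℕ) (hE : IsCantorDigits q E x) :
    QDistNormal q x ↔ UDMod1 (fun n => (E (n + 1) : ℝ) / (q (n + 1) : ℝ)) := by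
  refine udMod1_iff_of_tendsto_fract_sub ?_
  have hdigit (n : ℕ) : Int.fract ((E (n + 1) : ℝ) / q (n + 1)) = E (n + 1) / q (n + 1) := by
    have := hq (n + 1) (by omega)
    refine Int.fract_eq_self.2 ⟨by positivity, (div_lt_one (by positivity)).2 ?_⟩
    exact_mod_cast hE.1 (n + 1) (by omega)
  simpa only [TQ, Int.fract_fract, hdigit] using tendsto_TQ_sub_digit_div hq hinf hE
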